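/- Let λ1 > 0, λ2 > 0, a > 0, b > 0 be real with a + b ≤ 1, and let y be a complex number with ‖y‖ = 1 and y ≠ 1. Then there exists exactly one complex number x with ‖x‖ < 1 satisfying â(y)·x² + b̂(y)·x + ĉ(y) = 0, where â(y) = λ1·y·(λ2(y−1) − 1), b̂(y) = y·(λ1+λ2+λ1λ2+a+b) − b − λ2(1+λ1)·y², ĉ(y) = −a·y. (Equivalently, the kernel equation R(x,y) = 0 has exactly one root x = X₀(y) in the open unit disk.) -/

import Mathlib

/-! For `‖y‖ = 1`, `y ≠ 1` the middle coefficient dominates: writing `w = 1 + λ₂(1 - y)`, which has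
`‖w‖ > 1`, one has `‖â(y)‖ = λ₁‖w‖`, `‖ĉ(y)‖ = a` and `‖b̂(y)‖ ≥ (1 + λ₁)‖w‖ - (1 - a)`. For a quadratic
`A x² + B x + C` with `‖A‖ + ‖C‖ < ‖B‖` (Rouché against `B x`), Vieta's formulas `B = -A(r + s)`,
`C = A r s` turn this inequality into `‖A‖ (1 - ‖r‖) (1 - ‖s‖) < 0`, so exactly one root lies in the
open unit disk. -/

namespace Complex

theorem one_sub_norm_mul_one_sub_norm_neg {A r s : ℂ}
    (h : ‖A‖ + ‖A * (r * s)‖ < ‖A * (r + s)‖) : (1 - ‖r‖) * (1 - ‖s‖) < 0 := by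
  have hsum : ‖A * (r + s)‖ ≤ ‖A‖ * (‖r‖ + ‖s‖) := by
    rw [norm_mul]; gcongr; exact norm_add_le r s
  rw [norm_mul, norm_mul] at h
  refine neg_of_mul_neg_right (a := ‖A‖) ?_ (norm_nonneg A)
  linarith

theorem re_lt_one_of_norm_eq_one {y : ℂ} (hy : ‖y‖ = 1) (hy1 : y ≠ 1) : y.re < 1 := by
  refine (hy ▸ re_le_norm y).lt_of_ne fun hre => hy1 ?_
  obtain ⟨-, him⟩ := nonneg_iff.1 (re_eq_norm.1 (hre.trans hy.symm))
  exact ext hre him.symm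

theorem one_lt_norm_one_add_mul_one_sub {l : ℝ} (hl : 0 < l) {y : ℂ} (hy : ‖y‖ = 1)
    (hy1 : y ≠ 1) : 1 < ‖1 + l * (1 - y)‖ := by
  have hre : (1 + l * (1 - y)).re = 1 + l * (1 - y.re) := by simp
  calc (1 : ℝ) < 1 + l * (1 - y.re) := by
        nlinarith [re_lt_one_of_norm_eq_one hy hy1]
    _ ≤ ‖1 + l * (1 - y)‖ := hre ▸ re_le_norm _

theorem existsUnique_quadratic_root_norm_lt_one {A B C : ℂ} (h : ‖A‖ + ‖C‖ < ‖B‖) :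
    ∃! x : ℂ, ‖x‖ < 1 ∧ A * x ^ 2 + B * x + C = 0 := by
  have vieta : ∀ r s : ℂ, B = -(A * (r + s)) → C = A * (r * s) →
      (1 - ‖r‖) * (1 - ‖s‖) < 0 := by
    rintro r s rfl rfl
    exact one_sub_norm_mul_one_sub_norm_neg (by rwa [norm_neg] at h)
  refine existsUnique_of_exists_of_unique ?_ ?_
  · rcases eq_or_ne A 0 with rfl | hA
    · have hB : B ≠ 0 := norm_pos_iff.1 ((norm_nonneg C).trans_lt (by simpa using h))
      refine ⟨-C / B, ?_, by field_simp; ring⟩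
      rw [norm_div, norm_neg, div_lt_one (norm_pos_iff.2 hB)]
      simpa using h
    obtain ⟨r, hr⟩ :=
      exists_quadratic_eq_zero (b := B) (c := C) hA (IsAlgClosed.exists_eq_mul_self _)
    set s := -B / A - r with hs
    have hB : B = -(A * (r + s)) := by rw [hs]; field_simp; ring
    have hC : C = A * (r * s) := by linear_combination hr - r * hB
    clear_value s
    have hroot : ∀ x, x = r ∨ x = s → A * x ^ 2 + B * x + C = 0 := by
      rintro x (rfl | rfl) <;> linear_combination x * hB + hC
    by_cases hr1 : ‖r‖ < 1
    · exact ⟨r, hr1, hroot r (.inl rfl)⟩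
    · refine ⟨s, ?_, hroot s (.inr rfl)⟩
      nlinarith [vieta r s hB hC]
  · rintro x z ⟨hx, hxroot⟩ ⟨hz, hzroot⟩
    by_contra hxz
    have hB : B = -(A * (x + z)) := by
      refine mul_left_cancel₀ (sub_ne_zero.2 hxz) ?_
      linear_combination hxroot - hzroot
    have hC : C = A * (x * z) := by linear_combination hxroot - x * hB
    nlinarith [vieta x z hB hC]

end Complex

/-- Lemma 1, first assertion: for `‖y‖ = 1`, `y ≠ 1`, the kernel equation
`R(x,y) = 0` has exactly one root `x = X₀(y)` in the open unit disk. -/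
theorem kernel_unique_root_in_disk (l1 l2 a b : ℝ)
    (hl1 : 0 < l1) (hl2 : 0 < l2) (ha : 0 < a) (hb : 0 < b) (hab : a + b ≤ 1)
    (y : ℂ) (hy : ‖y‖ = 1) (hy1 : y ≠ 1) :
    ∃! x : ℂ, ‖x‖ < 1 ∧
      ((l1 : ℂ) * y * ((l2 : ℂ) * (y - 1) - 1)) * x ^ 2 +
        (y * ((l1 : ℂ) + (l2 : ℂ) + (l1 : ℂ) * (l2 : ℂ) + (a : ℂ) + (b : ℂ)) -
          (b : ℂ) - (l2 : ℂ) * (1 + (l1 : ℂ)) * y ^ 2) * x +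
        (-(a : ℂ) * y) = 0 := by
  set w : ℂ := 1 + l2 * (1 - y) with hw
  have hw1 : 1 < ‖w‖ := Complex.one_lt_norm_one_add_mul_one_sub hl2 hy hy1
  have hA : (l1 : ℂ) * y * (l2 * (y - 1) - 1) = -(l1 * y * w) := by rw [hw]; ring
  have hB : y * ((l1 : ℂ) + l2 + l1 * l2 + a + b) - b - l2 * (1 + l1) * y ^ 2 =
      y * (((1 + l1 : ℝ) : ℂ) * w - ((1 - a - b : ℝ) : ℂ)) - b := by
    rw [hw]; push_cast; ring
  apply Complex.existsUnique_quadratic_root_norm_lt_one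
  rw [hA, hB]
  calc ‖-((l1 : ℂ) * y * w)‖ + ‖-(a : ℂ) * y‖ = l1 * ‖w‖ + a := by
        simp [hy, abs_of_pos hl1, abs_of_pos ha]
    _ < ‖((1 + l1 : ℝ) : ℂ) * w‖ - ‖((1 - a - b : ℝ) : ℂ)‖ - ‖(b : ℂ)‖ := by
        simp only [norm_mul, Complex.norm_real, Real.norm_of_nonneg hb.le,
          Real.norm_of_nonneg (by linarith : 0 ≤ 1 + l1),
          Real.norm_of_nonneg (by linarith : 0 ≤ 1 - a - b)]
        linarith
    _ ≤ ‖y * (((1 + l1 : ℝ) : ℂ) * w - ((1 - a - b : ℝ) : ℂ))‖ - ‖(b : ℂ)‖ := by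
        rw [norm_mul y, hy, one_mul]
        gcongr
        exact norm_sub_norm_le _ _
    _ ≤ ‖y * (((1 + l1 : ℝ) : ℂ) * w - ((1 - a - b : ℝ) : ℂ)) - b‖ := norm_sub_norm_le _ _
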